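/- With the setup of Theorem 3, for fixed rate R and delay u, the diversity d(R,δ) is non-decreasing in the CSIT quality exponent δ ≥ 0, and it is constant for all δ ≥ a_{⌈d_S/n_t⌉ − u} (the value of the recursion at index ⌈d_S/n_t⌉ − u), i.e., a finite δ achieves the perfect-CSIT diversity. -/
import Mathlib


/-- Theorem 3 recursion: `a_b = 1` for `b ≤ u`, `a_b = a_{b−1} + c·min(δ, a_{b−u})`
for `b > u`, with `c = n_t·n_r`. -/
noncomputable def aT3 (u : ℕ) (c δ : ℝ) : ℕ → ℝ
  | 0 => 1
  | b + 1 =>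
    if b + 1 ≤ u then 1
    else aT3 u c δ b + c * min δ (aT3 u c δ (b - (u - 1)))
termination_by b => b
decreasing_by all_goals omega

/-- Singleton-bound diversity `d_S(R) = 1 + ⌊B (n_t − R/M)⌋`. -/
noncomputable def dS (B nt M : ℕ) (R : ℝ) : ℤ := 1 + ⌊(B : ℝ) * (nt - R / M)⌋

/-- `b̂ = ⌊d_S/n_t⌋`. -/
noncomputable def bhat (B nt M : ℕ) (R : ℝ) : ℕ := (dS B nt M R).toNat / nt

/-- Theorem 3: optimal rate-diversity tradeoff of the MIMO block-fading channel with
causal mismatched CSIT of delay `u` and quality exponent `δ`: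
`d(R,δ) = n_r·n_t·∑_{b=1}^{b̂} a_b + n_r·(d_S − b̂·n_t)·a_{b̂+1}`. -/
noncomputable def dCausal (nt nr B M u : ℕ) (R δ : ℝ) : ℝ :=
  nr * nt * (∑ b ∈ Finset.Icc 1 (bhat B nt M R), aT3 u ((nt : ℝ) * nr) δ b) +
    nr * ((dS B nt M R : ℝ) - (bhat B nt M R : ℝ) * nt) *
      aT3 u ((nt : ℝ) * nr) δ (bhat B nt M R + 1)

lemma aT3_of_le {u : ℕ} {c δ : ℝ} {b : ℕ} (hb : b ≤ u) : aT3 u c δ b = 1 := by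
  cases b with
  | zero => rw [aT3]
  | succ n => rw [aT3, if_pos hb]

lemma aT3_succ {u : ℕ} (hu : 1 ≤ u) {c δ : ℝ} {b : ℕ} (hb : u ≤ b) :
    aT3 u c δ (b + 1) = aT3 u c δ b + c * min δ (aT3 u c δ (b + 1 - u)) := by
  rw [aT3, if_neg (by omega)]
  have h : b - (u - 1) = b + 1 - u := by omega
  rw [h]

lemma aT3_one_le {u : ℕ} (hu : 1 ≤ u) {c δ : ℝ} (hc : 0 ≤ c) (hδ : 0 ≤ δ) :
    ∀ b, 1 ≤ aT3 u c δ b := by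
  intro b
  induction b using Nat.strong_induction_on with
  | _ b ih =>
    match b with
    | 0 => rw [aT3]
    | b + 1 =>
      by_cases h : b + 1 ≤ u
      · rw [aT3_of_le h]
      · rw [aT3_succ hu (by omega)]
        have h1 := ih b (by omega)
        have h2 := ih (b + 1 - u) (by omega)
        have h3 : 0 ≤ c * min δ (aT3 u c δ (b + 1 - u)) :=
          mul_nonneg hc (le_min hδ (by linarith))
        linarith

lemma aT3_mono_b {u : ℕ} (hu : 1 ≤ u) {c δ : ℝ} (hc : 0 ≤ c) (hδ : 0 ≤ δ) :
    Monotone (aT3 u c δ) := by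
  apply monotone_nat_of_le_succ
  intro b
  by_cases h : b + 1 ≤ u
  · rw [aT3_of_le h, aT3_of_le (by omega : b ≤ u)]
  · rw [aT3_succ hu (by omega)]
    have h2 := aT3_one_le hu hc hδ (b + 1 - u)
    have h3 : 0 ≤ c * min δ (aT3 u c δ (b + 1 - u)) :=
      mul_nonneg hc (le_min hδ (by linarith))
    linarith

lemma aT3_mono_delta {u : ℕ} (hu : 1 ≤ u) {c δ₁ δ₂ : ℝ} (hc : 0 ≤ c) (h12 : δ₁ ≤ δ₂) :
    ∀ b, aT3 u c δ₁ b ≤ aT3 u c δ₂ b := by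
  intro b
  induction b using Nat.strong_induction_on with
  | _ b ih =>
    match b with
    | 0 => rw [aT3, aT3]
    | b + 1 =>
      by_cases h : b + 1 ≤ u
      · rw [aT3_of_le h, aT3_of_le h]
      · rw [aT3_succ hu (by omega), aT3_succ hu (by omega)]
        have h1 := ih b (by omega)
        have h2 := ih (b + 1 - u) (by omega)
        have h3 : min δ₁ (aT3 u c δ₁ (b + 1 - u)) ≤ min δ₂ (aT3 u c δ₂ (b + 1 - u)) :=
          min_le_min h12 h2
        have h4 := mul_le_mul_of_nonneg_left h3 hc
        linarith

lemma aT3_sat {u m : ℕ} (hu : 1 ≤ u) {c δ₁ δ₂ : ℝ} (hc : 0 ≤ c)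
    (hδ₁ : 0 ≤ δ₁) (hδ₂ : 0 ≤ δ₂)
    (hs1 : aT3 u c δ₁ m ≤ δ₁) (hs2 : aT3 u c δ₂ m ≤ δ₂) :
    ∀ b ≤ m + u, aT3 u c δ₁ b = aT3 u c δ₂ b := by
  intro b
  induction b using Nat.strong_induction_on with
  | _ b ih =>
    intro hb
    match b with
    | 0 => rw [aT3, aT3]
    | b + 1 =>
      by_cases h : b + 1 ≤ u
      · rw [aT3_of_le h, aT3_of_le h]
      · have hle : b + 1 - u ≤ m := by omega
        have e1 : min δ₁ (aT3 u c δ₁ (b + 1 - u)) = aT3 u c δ₁ (b + 1 - u) :=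
          min_eq_right ((aT3_mono_b hu hc hδ₁ hle).trans hs1)
        have e2 : min δ₂ (aT3 u c δ₂ (b + 1 - u)) = aT3 u c δ₂ (b + 1 - u) :=
          min_eq_right ((aT3_mono_b hu hc hδ₂ hle).trans hs2)
        rw [aT3_succ hu (by omega), aT3_succ hu (by omega), e1, e2,
          ih b (by omega) (by omega), ih (b + 1 - u) (by omega) (by omega)]

/-- For fixed rate `R` and delay `u`, the Theorem 3 diversity is non-decreasing in the
CSIT quality exponent `δ`, and it is constant for all `δ` at least the threshold
`a_{⌈d_S/n_t⌉ − u}` (the value of the recursion at index `⌈d_S/n_t⌉ − u`); i.e., a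
finite `δ` achieves the perfect-CSIT diversity. -/
theorem dCausal_monotone_and_saturates (nt nr B M u : ℕ)
    (hnt : 0 < nt) (hnr : 0 < nr) (hB : 0 < B) (hM : 0 < M) (hu : 1 ≤ u)
    (R : ℝ) (hR0 : 0 < R) (hR1 : R < (nt : ℝ) * M) :
    (∀ δ₁ δ₂ : ℝ, 0 ≤ δ₁ → δ₁ ≤ δ₂ →
      dCausal nt nr B M u R δ₁ ≤ dCausal nt nr B M u R δ₂) ∧
    (∀ δ₁ δ₂ : ℝ, 0 ≤ δ₁ → 0 ≤ δ₂ →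
      aT3 u ((nt : ℝ) * nr) δ₁ (((dS B nt M R).toNat + nt - 1) / nt - u) ≤ δ₁ →
      aT3 u ((nt : ℝ) * nr) δ₂ (((dS B nt M R).toNat + nt - 1) / nt - u) ≤ δ₂ →
      dCausal nt nr B M u R δ₁ = dCausal nt nr B M u R δ₂) := by
  have hc : (0 : ℝ) ≤ (nt : ℝ) * nr := by positivity
  -- d_S is positive
  have hdpos : 0 < dS B nt M R := by
    unfold dS
    have hRM : R / M < (nt : ℝ) := (div_lt_iff₀ (by positivity)).mpr (by linarith)
    have h0 : 0 ≤ (B : ℝ) * ((nt : ℝ) - R / M) :=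
      mul_nonneg (by positivity) (by linarith)
    have := Int.floor_nonneg.mpr h0
    omega
  set d := (dS B nt M R).toNat with hd
  have hdd : (d : ℤ) = dS B nt M R := Int.toNat_of_nonneg hdpos.le
  have hdcast : ((dS B nt M R : ℝ)) = (d : ℝ) := by exact_mod_cast hdd.symm
  have hbhat : bhat B nt M R = d / nt := rfl
  have hcoef : (0 : ℝ) ≤ (dS B nt M R : ℝ) - (bhat B nt M R : ℝ) * nt := by
    rw [hdcast, hbhat]
    have h1 : d / nt * nt ≤ d := Nat.div_mul_le_self d nt
    have h2 : ((d / nt : ℕ) : ℝ) * (nt : ℝ) ≤ (d : ℝ) := by exact_mod_cast h1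
    linarith
  constructor
  · -- monotone in δ
    intro δ₁ δ₂ h1 h12
    unfold dCausal
    have hsum : (∑ b ∈ Finset.Icc 1 (bhat B nt M R), aT3 u ((nt : ℝ) * nr) δ₁ b) ≤
        ∑ b ∈ Finset.Icc 1 (bhat B nt M R), aT3 u ((nt : ℝ) * nr) δ₂ b :=
      Finset.sum_le_sum fun b _ => aT3_mono_delta hu hc h12 b
    have hlast := aT3_mono_delta hu hc h12 (bhat B nt M R + 1)
    have t1 := mul_le_mul_of_nonneg_left hsum (by positivity : (0 : ℝ) ≤ (nr : ℝ) * nt)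
    have t2 := mul_le_mul_of_nonneg_left hlast
      (mul_nonneg (by positivity : (0 : ℝ) ≤ (nr : ℝ)) hcoef)
    exact add_le_add t1 t2
  · -- saturation
    intro δ₁ δ₂ h1 h2 hs1 hs2
    set m := (d + nt - 1) / nt - u with hm
    have hEq : ∀ b ≤ m + u, aT3 u ((nt : ℝ) * nr) δ₁ b = aT3 u ((nt : ℝ) * nr) δ₂ b :=
      aT3_sat hu hc h1 h2 hs1 hs2
    have hceil : d / nt ≤ (d + nt - 1) / nt :=
      Nat.div_le_div_right (by omega)
    have hbound : d / nt ≤ m + u := by omega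
    unfold dCausal
    have hsum : (∑ b ∈ Finset.Icc 1 (bhat B nt M R), aT3 u ((nt : ℝ) * nr) δ₁ b) =
        ∑ b ∈ Finset.Icc 1 (bhat B nt M R), aT3 u ((nt : ℝ) * nr) δ₂ b := by
      refine Finset.sum_congr rfl fun b hb => hEq b ?_
      have := (Finset.mem_Icc.mp hb).2
      rw [hbhat] at this
      omega
    by_cases hr : d % nt = 0
    · have hdvd : d / nt * nt = d := Nat.div_mul_cancel (Nat.dvd_of_mod_eq_zero hr)
      have hX : (dS B nt M R : ℝ) - (bhat B nt M R : ℝ) * nt = 0 := by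
        rw [hdcast, hbhat]
        have : ((d / nt : ℕ) : ℝ) * (nt : ℝ) = (d : ℝ) := by exact_mod_cast hdvd
        linarith
      rw [hX, hsum]
      ring
    · have hkey : d / nt + 1 ≤ (d + nt - 1) / nt := by
        rw [Nat.le_div_iff_mul_le hnt, add_mul, one_mul, mul_comm (d / nt) nt]
        have hq := Nat.div_add_mod d nt
        have hrr : 1 ≤ d % nt := Nat.one_le_iff_ne_zero.mpr hr
        generalize nt * (d / nt) = t at hq ⊢
        omega
      have hlast : aT3 u ((nt : ℝ) * nr) δ₁ (bhat B nt M R + 1) =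
          aT3 u ((nt : ℝ) * nr) δ₂ (bhat B nt M R + 1) := by
        refine hEq _ ?_
        rw [hbhat]
        omega
      rw [hsum, hlast]
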